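/- arXiv:1909.09206 — 3 statements merged into one kernel-verified Lean document; each statement's English description precedes it below -/
import Mathlib

section
/- Let S_k denote the k-th elementary symmetric polynomial in N complex variables and let p_k (k = 1,...,N) be polynomials in N variables with deg p_k ≤ k-1. Then the set of solutions (x₁,...,x_N) ∈ ℂ^N of the system S_k(x₁,...,x_N) = p_k(x₁,...,x_N) for k = 1,...,N is nonempty and finite. -/
/-!
Finiteness: evaluating Vieta's formula `∏ⱼ (T - xⱼ) = ∑ₖ (-1)ᵏ Sₖ(x) T^(N-k)` at `T = xᵢ` shows
that modulo the ideal of the system, `xᵢ ^ N` is congruent to a polynomial of degree `< N`. Hence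
the quotient ring is finite dimensional over `ℂ`, so it has only finitely many `ℂ`-points.

Existence: homogenizing `Sₖ - pₖ` with a new variable `x₀` gives `N` forms in `N + 1` variables.
By Krull's height theorem, and because every maximal ideal of `ℂ[x₀, …, x_N]` has height `N + 1`,
they have a common zero `z ≠ 0`. At infinity (`x₀ = 0`) the system reduces to `Sₖ = 0`, whose only
solution is `0`; so `z₀ ≠ 0`, and dehomogenizing `z` gives a solution.
-/

open MvPolynomial

namespace MvPolynomial

section Translate

variable {σ R : Type*} [CommRing R]

noncomputable def translate (c : σ → R) : MvPolynomial σ R ≃ₐ[R] MvPolynomial σ R :=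
  AlgEquiv.ofAlgHom (aeval fun i => X i + C (c i)) (aeval fun i => X i - C (c i))
    (by ext i; simp) (by ext i; simp)

lemma eval_translate (c x : σ → R) (p : MvPolynomial σ R) :
    eval x (translate c p) = eval (x + c) p := by
  induction p using MvPolynomial.induction_on <;> simp_all [translate]

lemma comap_translate_vanishingIdeal_singleton {K : Type*} [Field K] (c a : σ → K) :
    (vanishingIdeal K {a}).comap (translate c) = vanishingIdeal K {a + c} := by
  ext p
  simp only [Ideal.mem_comap, mem_vanishingIdeal_singleton_iff]
  change eval a (translate c p) = 0 ↔ eval (a + c) p = 0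
  rw [eval_translate]

end Translate

section Height

variable {σ K : Type*} [Field K] [IsAlgClosed K]

/-- All maximal ideals are translates of each other, so they share the height `dim = card σ`. -/
lemma height_vanishingIdeal_singleton [Finite σ] (a : σ → K) :
    (vanishingIdeal K {a}).height = Nat.card σ := by
  have hdim : ringKrullDim (MvPolynomial σ K) = Nat.card σ := by
    simp [ringKrullDim_eq_zero_of_field]
  have hle : (vanishingIdeal K {a}).height ≤ ringKrullDim (MvPolynomial σ K) :=
    Ideal.height_le_ringKrullDim_of_ne_top Ideal.IsPrime.ne_top'
  have hge : ringKrullDim (MvPolynomial σ K) ≤ (vanishingIdeal K {a}).height := by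
    rw [ringKrullDim_le_iff_isMaximal_height_le]
    intro m hm
    obtain ⟨b, rfl⟩ := eq_vanishingIdeal_singleton_of_isMaximal K hm
    rw [← add_sub_cancel a b, ← comap_translate_vanishingIdeal_singleton]
    exact_mod_cast (RingEquiv.height_comap (translate (b - a)).toRingEquiv _).le
  rw [hdim] at hle hge
  exact_mod_cast le_antisymm hle hge

theorem exists_ne_zero_forall_eval_eq_zero [Fintype σ] {ι : Type*} [Fintype ι]
    (f : ι → MvPolynomial σ K) (hcard : Fintype.card ι < Fintype.card σ)
    (hf : ∀ i, eval 0 (f i) = 0) : ∃ z ≠ 0, ∀ i, eval z (f i) = 0 := by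
  classical
  by_contra h
  have hzero : zeroLocus K (Ideal.span (Set.range f)) = {0} := by
    ext z
    simp only [zeroLocus_span, Set.forall_mem_range, Set.mem_singleton_iff]
    exact ⟨fun hz => by_contra fun hz0 => h ⟨z, hz0, hz⟩, fun hz => hz ▸ hf⟩
  have hmin : vanishingIdeal K {(0 : σ → K)} ∈
      (Ideal.span (Finset.univ.image f : Set (MvPolynomial σ K))).minimalPrimes := by
    rw [Finset.coe_image, Finset.coe_univ, Set.image_univ, ← Ideal.radical_minimalPrimes,
      ← vanishingIdeal_zeroLocus_eq_radical (K := K), hzero,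
      Ideal.minimalPrimes_eq_subsingleton_self]
    rfl
  have hheight := Ideal.height_le_card_of_mem_minimalPrimes_span_finset hmin
  rw [height_vanishingIdeal_singleton, Nat.card_eq_fintype_card, Nat.cast_le] at hheight
  exact (hcard.trans_le hheight).not_ge (Finset.card_image_le.trans_eq Finset.card_univ)

end Height

section Homogenize

variable {σ R : Type*} [CommSemiring R]

lemma IsHomogeneous.eval_smul {φ : MvPolynomial σ R} {n : ℕ} (hφ : φ.IsHomogeneous n)
    (t : R) (y : σ → R) : eval (t • y) φ = t ^ n * eval y φ := by
  rw [eval_eq, eval_eq, Finset.mul_sum]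
  refine Finset.sum_congr rfl fun d hd => ?_
  have hdeg : ∑ i ∈ d.support, d i = n := (hφ.degree_eq_sum_deg_support hd).symm
  simp only [Pi.smul_apply, smul_eq_mul, mul_pow, Finset.prod_mul_distrib,
    Finset.prod_pow_eq_pow_sum, hdeg]
  ring

noncomputable def homogenize (q : MvPolynomial σ R) (D : ℕ) : MvPolynomial (Option σ) R :=
  ∑ j ∈ Finset.range (D + 1), X none ^ (D - j) * rename some (homogeneousComponent j q)

lemma eval_homogenize (z : Option σ → R) (q : MvPolynomial σ R) (D : ℕ) :
    eval z (homogenize q D) =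
      ∑ j ∈ Finset.range (D + 1),
        z none ^ (D - j) * eval (z ∘ some) (homogeneousComponent j q) := by
  simp [homogenize, eval_rename]

lemma eval_homogenize_of_eq_zero {z : Option σ → R} (hz : z none = 0) (q : MvPolynomial σ R)
    (D : ℕ) : eval z (homogenize q D) = eval (z ∘ some) (homogeneousComponent D q) := by
  rw [eval_homogenize, Finset.sum_eq_single D]
  · simp
  · intro j hj hjD
    rw [hz, zero_pow (by grind), zero_mul]
  · simp

lemma sum_homogeneousComponent_of_totalDegree_le {q : MvPolynomial σ R} {D : ℕ}
    (hq : q.totalDegree ≤ D) : ∑ j ∈ Finset.range (D + 1), homogeneousComponent j q = q := by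
  calc ∑ j ∈ Finset.range (D + 1), homogeneousComponent j q
      = ∑ j ∈ Finset.range (q.totalDegree + 1), homogeneousComponent j q :=
        (Finset.sum_subset (Finset.range_subset_range.mpr (by omega)) fun j _ hj =>
          homogeneousComponent_eq_zero _ _ (by simpa using hj)).symm
    _ = q := sum_homogeneousComponent q

lemma eval_homogenize_of_ne_zero {K : Type*} [Field K] {z : Option σ → K} (hz : z none ≠ 0)
    {q : MvPolynomial σ K} {D : ℕ} (hq : q.totalDegree ≤ D) :
    eval z (homogenize q D) = z none ^ D * eval (fun i => z (some i) / z none) q := by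
  have hscale : z ∘ some = z none • fun i => z (some i) / z none := by
    funext i
    simp [mul_div_cancel₀ _ hz]
  conv_rhs => rw [← sum_homogeneousComponent_of_totalDegree_le hq, map_sum, Finset.mul_sum]
  rw [eval_homogenize]
  refine Finset.sum_congr rfl fun j hj => ?_
  rw [hscale, (homogeneousComponent_isHomogeneous j q).eval_smul, ← mul_assoc, ← pow_add,
    Nat.sub_add_cancel (by grind)]

end Homogenize

section Esymm

variable (σ R : Type*) [Fintype σ]

lemma isHomogeneous_esymm [CommSemiring R] (n : ℕ) : (esymm σ R n).IsHomogeneous n := by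
  refine IsHomogeneous.sum _ _ _ fun t ht => ?_
  convert IsHomogeneous.prod t _ (fun _ => 1) fun i _ => isHomogeneous_X R i
  simp [(Finset.mem_powersetCard.mp ht).2]

lemma X_pow_card_eq_sum_esymm [CommRing R] (i : σ) :
    X i ^ Fintype.card σ = ∑ k ∈ Finset.range (Fintype.card σ),
      (-1) ^ k * esymm σ R (k + 1) * X i ^ (Fintype.card σ - (k + 1)) := by
  set s : Multiset (MvPolynomial σ R) := Finset.univ.val.map X
  have hcard : Multiset.card s = Fintype.card σ := by simp [s]
  have hesymm : ∀ j, s.esymm j = esymm σ R j := fun j => (esymm_eq_multiset_esymm σ R ▸ rfl)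
  have hroot :
      Polynomial.eval (X i) ((s.map fun t => Polynomial.X - Polynomial.C t).prod) = 0 := by
    rw [Polynomial.eval_multiset_prod]
    exact Multiset.prod_eq_zero (Multiset.mem_map.mpr ⟨_, Multiset.mem_map.mpr
      ⟨X i, Multiset.mem_map_of_mem _ (Finset.mem_univ_val i), rfl⟩, by simp⟩)
  rw [Multiset.prod_X_sub_X_eq_sum_esymm, hcard, Finset.sum_range_succ'] at hroot
  simp only [Polynomial.eval_add, Polynomial.eval_finsetSum, Polynomial.eval_mul,
    Polynomial.eval_pow, Polynomial.eval_neg, Polynomial.eval_one, Polynomial.eval_C,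
    Polynomial.eval_X, hesymm, esymm_zero, pow_zero, one_mul, Nat.sub_zero] at hroot
  rw [eq_neg_of_add_eq_zero_right hroot, ← Finset.sum_neg_distrib]
  refine Finset.sum_congr rfl fun k _ => ?_
  ring

lemma eq_zero_of_forall_eval_esymm_eq_zero [CommRing R] [IsReduced R] {x : σ → R}
    (hx : ∀ k < Fintype.card σ, eval x (esymm σ R (k + 1)) = 0) : x = 0 := by
  funext i
  have hpow := congrArg (eval x) (X_pow_card_eq_sum_esymm σ R i)
  simp only [map_pow, eval_X, map_sum, map_mul] at hpow
  rw [Finset.sum_eq_zero fun k hk => by rw [hx k (Finset.mem_range.mp hk), mul_zero, zero_mul]]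
    at hpow
  exact eq_zero_of_pow_eq_zero hpow

end Esymm

section FiniteQuotient

variable {σ K : Type*} [Field K]

lemma mem_span_of_totalDegree_lt {M : Type*} [AddCommMonoid M] [Module K M]
    (f : MvPolynomial σ K →ₗ[K] M) {V : Submodule K M} {d : ℕ}
    (hV : ∀ μ : σ →₀ ℕ, μ.degree < d → f (monomial μ 1) ∈ V) {p : MvPolynomial σ K}
    (hp : p.totalDegree < d) : f p ∈ V := by
  rw [p.as_sum, map_sum]
  refine Submodule.sum_mem _ fun μ hμ => ?_
  rw [← mul_one (coeff μ p), ← smul_eq_mul, ← smul_monomial, map_smul]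
  exact V.smul_mem _ (hV μ ((le_totalDegree hμ).trans_lt hp))

lemma finite_quotient_of_X_pow_sub_mem [Finite σ] {I : Ideal (MvPolynomial σ K)} {n : ℕ}
    (h : ∀ i, ∃ g : MvPolynomial σ K, g.totalDegree < n ∧ X i ^ n - g ∈ I) :
    Module.Finite K (MvPolynomial σ K ⧸ I) := by
  classical
  choose g hg_deg hg_mem using h
  set mk := Ideal.Quotient.mkₐ K I
  set B : Set (σ →₀ ℕ) := {μ | ∀ i, μ i < n}
  have hB : B.Finite := (Set.finite_Icc 0 (Finsupp.equivFunOnFinite.symm fun _ => n)).subset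
    fun μ hμ => ⟨zero_le, fun i => (hμ i).le⟩
  set V := Submodule.span K ((fun μ => mk (monomial μ 1)) '' B)
  have hreduce : ∀ μ i, n ≤ μ i →
      mk (monomial μ 1) = mk (g i * monomial (μ - Finsupp.single i n) 1) := by
    intro μ i hi
    have hμ : monomial μ (1 : K) = X i ^ n * monomial (μ - Finsupp.single i n) 1 := by
      rw [X_pow_eq_monomial, monomial_mul, one_mul, add_tsub_cancel_of_le]
      exact Finsupp.single_le_iff.mpr hi
    rw [hμ, ← sub_eq_zero, ← map_sub, ← sub_mul]
    exact Ideal.Quotient.eq_zero_iff_mem.mpr (I.mul_mem_right _ (hg_mem i))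
  have hmono : ∀ d, ∀ μ : σ →₀ ℕ, μ.degree < d → mk (monomial μ 1) ∈ V := by
    intro d
    induction d with
    | zero => intro μ hμ; omega
    | succ d ih =>
      intro μ hμ
      by_cases hμB : μ ∈ B
      · exact Submodule.subset_span ⟨μ, hμB, rfl⟩
      obtain ⟨i, hi⟩ : ∃ i, n ≤ μ i := by simpa [B] using hμB
      rw [hreduce μ i hi]
      refine mem_span_of_totalDegree_lt mk.toLinearMap ih ?_
      have hdeg : (μ - Finsupp.single i n).degree + n = μ.degree := by
        have := congrArg Finsupp.degree (tsub_add_cancel_of_le (Finsupp.single_le_iff.mpr hi))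
        rwa [map_add, Finsupp.degree_single] at this
      calc (g i * monomial (μ - Finsupp.single i n) 1).totalDegree
          ≤ (g i).totalDegree + (μ - Finsupp.single i n).degree :=
            (totalDegree_mul _ _).trans (by rw [totalDegree_monomial _ one_ne_zero]; rfl)
        _ < d := by have := hg_deg i; omega
  have hV : V = ⊤ := by
    refine eq_top_iff.mpr fun a _ => ?_
    obtain ⟨p, rfl⟩ := Ideal.Quotient.mkₐ_surjective K I a
    exact mem_span_of_totalDegree_lt mk.toLinearMap (hmono _) (Nat.lt_succ_self p.totalDegree)
  exact Module.finite_def.mpr (hV ▸ Submodule.fg_span (hB.image _))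

lemma zeroLocus_finite_of_finite_quotient {k : Type*} [Field k] [Algebra k K]
    {I : Ideal (MvPolynomial σ k)} [Module.Finite k (MvPolynomial σ k ⧸ I)] :
    (zeroLocus K I).Finite := by
  let φ : zeroLocus K I → (MvPolynomial σ k ⧸ I →ₐ[k] K) := fun x =>
    Ideal.Quotient.liftₐ I (aeval x.1) (mem_zeroLocus_iff.mp x.2)
  have hφ : Function.Injective φ := by
    intro x y hxy
    ext i
    have hi := DFunLike.congr_fun hxy (Ideal.Quotient.mkₐ k I (X i))
    dsimp only [φ] at hi
    rwa [← AlgHom.comp_apply, ← AlgHom.comp_apply, Ideal.Quotient.liftₐ_comp,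
      Ideal.Quotient.liftₐ_comp, aeval_X, aeval_X] at hi
  exact Set.finite_coe_iff.mp (Finite.of_injective φ hφ)

end FiniteQuotient

end MvPolynomial

section EsymmSystem

variable {N : ℕ}

def esymmSolutions (p : Fin N → MvPolynomial (Fin N) ℂ) : Set (Fin N → ℂ) :=
  {x | ∀ k : Fin N, eval x (esymm (Fin N) ℂ (k + 1)) = eval x (p k)}

lemma X_pow_sub_mem_span_esymm_sub {R : Type*} [CommRing R]
    (p : Fin N → MvPolynomial (Fin N) R) (i : Fin N) :
    X i ^ N - ∑ k : Fin N, (-1) ^ (k : ℕ) * p k * X i ^ (N - (k + 1)) ∈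
      Ideal.span (Set.range fun k : Fin N => esymm (Fin N) R (k + 1) - p k) := by
  have hvieta := X_pow_card_eq_sum_esymm (Fin N) R i
  rw [Fintype.card_fin, ← Fin.sum_univ_eq_sum_range
    (fun k => (-1) ^ k * esymm (Fin N) R (k + 1) * X i ^ (N - (k + 1)))] at hvieta
  rw [hvieta, ← Finset.sum_sub_distrib]
  refine Ideal.sum_mem _ fun k _ => ?_
  rw [show (-1) ^ (k : ℕ) * esymm (Fin N) R (k + 1) * X i ^ (N - (k + 1)) -
      (-1) ^ (k : ℕ) * p k * X i ^ (N - (k + 1)) =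
      ((-1) ^ (k : ℕ) * X i ^ (N - (k + 1))) * (esymm (Fin N) R (k + 1) - p k) by ring]
  exact Ideal.mul_mem_left _ _ (Ideal.subset_span ⟨k, rfl⟩)

lemma totalDegree_sum_neg_one_pow_mul_lt {R : Type*} [CommRing R]
    {p : Fin N → MvPolynomial (Fin N) R} (hp : ∀ k : Fin N, (p k).totalDegree ≤ k) (i : Fin N) :
    (∑ k : Fin N, (-1) ^ (k : ℕ) * p k * X i ^ (N - (k + 1))).totalDegree < N := by
  refine (totalDegree_finsetSum _ _).trans_lt <|
    (Finset.sup_lt_iff (by simpa using i.pos)).mpr fun k _ => ?_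
  have hsign : ((-1 : MvPolynomial (Fin N) R) ^ (k : ℕ)).totalDegree = 0 :=
    Nat.eq_zero_of_le_zero <| (totalDegree_pow _ _).trans (by simp)
  calc ((-1) ^ (k : ℕ) * p k * X i ^ (N - (k + 1))).totalDegree
      ≤ 0 + (p k).totalDegree + (N - (k + 1)) := by
        refine (totalDegree_mul _ _).trans (add_le_add ?_ ?_)
        · exact hsign ▸ totalDegree_mul _ _
        · exact (isHomogeneous_X_pow _ _).totalDegree_le
    _ < N := by have := hp k; omega

theorem esymmSolutions_finite (p : Fin N → MvPolynomial (Fin N) ℂ)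
    (hp : ∀ k : Fin N, (p k).totalDegree ≤ k) : (esymmSolutions p).Finite := by
  set I := Ideal.span (Set.range fun k : Fin N => esymm (Fin N) ℂ (k + 1) - p k)
  have hsol : esymmSolutions p = zeroLocus ℂ I := by
    ext x
    simp [esymmSolutions, I, zeroLocus_span, sub_eq_zero]
  have : Module.Finite ℂ (MvPolynomial (Fin N) ℂ ⧸ I) := finite_quotient_of_X_pow_sub_mem
    fun i => ⟨_, totalDegree_sum_neg_one_pow_mul_lt hp i, X_pow_sub_mem_span_esymm_sub p i⟩
  exact hsol ▸ zeroLocus_finite_of_finite_quotient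

theorem esymmSolutions_nonempty (p : Fin N → MvPolynomial (Fin N) ℂ)
    (hp : ∀ k : Fin N, (p k).totalDegree ≤ k) : (esymmSolutions p).Nonempty := by
  set F : Fin N → MvPolynomial (Option (Fin N)) ℂ :=
    fun k => homogenize (esymm (Fin N) ℂ (k + 1) - p k) (k + 1)
  have hF_infinity : ∀ z : Option (Fin N) → ℂ, z none = 0 →
      ∀ k, eval z (F k) = eval (z ∘ some) (esymm (Fin N) ℂ (k + 1)) := by
    intro z hz k
    rw [eval_homogenize_of_eq_zero hz, map_sub,
      homogeneousComponent_eq_self (isHomogeneous_esymm _ _ _),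
      homogeneousComponent_eq_zero _ _ (Nat.lt_succ_of_le (hp k)), sub_zero]
  obtain ⟨z, hz0, hz⟩ := exists_ne_zero_forall_eval_eq_zero F (by simp) fun k => by
    rw [hF_infinity 0 rfl]
    change eval 0 _ = 0
    rw [eval_zero, constantCoeff_eq]
    exact (isHomogeneous_esymm _ _ _).coeff_eq_zero (by simp)
  have hz_affine : z none ≠ 0 := by
    intro h
    have hz_some : z ∘ some = 0 := eq_zero_of_forall_eval_esymm_eq_zero _ _ fun k hk => by
      rw [← hF_infinity z h ⟨k, by simpa using hk⟩]
      exact hz _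
    exact hz0 (funext fun o => o.rec h (congrFun hz_some))
  refine ⟨fun i => z (some i) / z none, fun k => ?_⟩
  have hdeg : (esymm (Fin N) ℂ (k + 1) - p k).totalDegree ≤ k + 1 :=
    (totalDegree_sub _ _).trans (max_le (isHomogeneous_esymm _ _ _).totalDegree_le
      ((hp k).trans (Nat.le_succ _)))
  have hk := hz k
  rw [eval_homogenize_of_ne_zero hz_affine hdeg, map_sub] at hk
  exact sub_eq_zero.mp ((mul_eq_zero.mp hk).resolve_left (pow_ne_zero _ hz_affine))

end EsymmSystem

theorem esymm_system_nonempty_finite_general (N : ℕ)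
    (p : Fin N → MvPolynomial (Fin N) ℂ)
    (hp : ∀ k : Fin N, (p k).totalDegree ≤ (k : ℕ)) :
    {x : Fin N → ℂ |
        ∀ k : Fin N,
          MvPolynomial.eval x (MvPolynomial.esymm (Fin N) ℂ ((k : ℕ) + 1))
            = MvPolynomial.eval x (p k)}.Nonempty ∧
    {x : Fin N → ℂ |
        ∀ k : Fin N,
          MvPolynomial.eval x (MvPolynomial.esymm (Fin N) ℂ ((k : ℕ) + 1))
            = MvPolynomial.eval x (p k)}.Finite :=
  ⟨esymmSolutions_nonempty p hp, esymmSolutions_finite p hp⟩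

/-- The system `S_k(x) = p_k(x)`, `k = 1, …, N`, where `S_k` is the `k`-th
elementary symmetric polynomial and `deg p_k ≤ k-1`, has a nonempty finite
solution set in `ℂ^N`. -/
theorem esymm_system_nonempty_finite (N : ℕ) (hN : 1 ≤ N)
    (p : Fin N → MvPolynomial (Fin N) ℂ)
    (hp : ∀ k : Fin N, (p k).totalDegree ≤ (k : ℕ)) :
    {x : Fin N → ℂ |
        ∀ k : Fin N,
          MvPolynomial.eval x (MvPolynomial.esymm (Fin N) ℂ ((k : ℕ) + 1))
            = MvPolynomial.eval x (p k)}.Nonempty ∧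
    {x : Fin N → ℂ |
        ∀ k : Fin N,
          MvPolynomial.eval x (MvPolynomial.esymm (Fin N) ℂ ((k : ℕ) + 1))
            = MvPolynomial.eval x (p k)}.Finite :=
  esymm_system_nonempty_finite_general N p hp
end

section
/- For the period-4 discrete Schrödinger operator with a(n) ≡ -1 and 4-periodic potential b with b(1) = b(4) = α + σ√2, b(2) = b(3) = α - σ√2/2 (σ ∈ {-1,1}, α ∈ ℂ), the Dirichlet polynomial v(4; λ) equals -λ³ + 3αλ² - (3α² - 7/2)λ + α³ - 7α/2; in particular it is independent of the sign σ. -/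
/-! Three steps of the recurrence give `v 4 = x₁x₂x₃ - x₁ - x₃` with `xᵢ = b i - λ`.
Writing `t = σ√2`, so that `b 1 = α + t` and `b 2 = b 3 = α - t/2`, the only odd power of `t`
surviving in `x₁x₂x₃` is `t³/4 = t/2` (as `t² = 2`), and it cancels against `-(x₁ + x₃)`. -/

section ThreeTermRecurrence

variable {R : Type*} [CommRing R] {b v : ℤ → R} {lam : R}

theorem succ_eq_of_recurrence (hv : ∀ n : ℤ, -v (n + 1) - v (n - 1) + b n * v n = lam * v n)
    (n : ℤ) : v (n + 1) = (b n - lam) * v n - v (n - 1) := by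
  linear_combination -hv n

theorem four_eq_of_recurrence (hv : ∀ n : ℤ, -v (n + 1) - v (n - 1) + b n * v n = lam * v n)
    (hv0 : v 0 = 0) (hv1 : v 1 = 1) :
    v 4 = (b 3 - lam) * (b 2 - lam) * (b 1 - lam) - (b 3 - lam) - (b 1 - lam) := by
  have hv2 : v 2 = b 1 - lam := by
    simpa [hv0, hv1] using succ_eq_of_recurrence hv 1
  have hv3 : v 3 = (b 2 - lam) * (b 1 - lam) - 1 := by
    simpa [hv1, hv2] using succ_eq_of_recurrence hv 2
  have hv4 : v 4 = (b 3 - lam) * v 3 - v 2 := by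
    simpa using succ_eq_of_recurrence hv 3
  rw [hv4, hv3, hv2]
  ring

end ThreeTermRecurrence

theorem dirichlet_poly_independent_of_sign_general (α σ : ℂ) (hσ : σ ^ 2 = 1)
    (b : ℤ → ℂ)
    (hb1 : b 1 = α + σ * Real.sqrt 2)
    (hb2 : b 2 = α - σ * (Real.sqrt 2 / 2)) (hb3 : b 3 = α - σ * (Real.sqrt 2 / 2))
    (lam : ℂ) (v : ℤ → ℂ)
    (hv : ∀ n : ℤ, -v (n + 1) - v (n - 1) + b n * v n = lam * v n)
    (hv0 : v 0 = 0) (hv1 : v 1 = 1) :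
    v 4 = -lam ^ 3 + 3 * α * lam ^ 2 - (3 * α ^ 2 - 7 / 2) * lam + α ^ 3 - 7 * α / 2 := by
  have hsqrt : ((Real.sqrt 2 : ℝ) : ℂ) ^ 2 = 2 := by
    exact_mod_cast Real.sq_sqrt zero_le_two
  rw [four_eq_of_recurrence hv hv0 hv1, hb1, hb2, hb3]
  linear_combination (σ ^ 2 * (Real.sqrt 2 * σ / 4 - 3 * (α - lam) / 4)) * hsqrt +
    (Real.sqrt 2 * σ / 2 - 3 * (α - lam) / 2) * hσ

/-- For `a(n) ≡ -1` and the 4-periodic potential with `b(1)=b(4)=α+σ√2`,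
`b(2)=b(3)=α-σ√2/2` (`σ² = 1`), the Dirichlet polynomial satisfies
`v(4;λ) = -λ³ + 3αλ² - (3α² - 7/2)λ + α³ - 7α/2`, independently of `σ`. -/
theorem dirichlet_poly_independent_of_sign (α σ : ℂ) (hσ : σ ^ 2 = 1)
    (b : ℤ → ℂ)
    (hb1 : b 1 = α + σ * Real.sqrt 2) (hb4 : b 4 = α + σ * Real.sqrt 2)
    (hb2 : b 2 = α - σ * (Real.sqrt 2 / 2)) (hb3 : b 3 = α - σ * (Real.sqrt 2 / 2))
    (lam : ℂ) (v : ℤ → ℂ)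
    (hv : ∀ n : ℤ, -v (n + 1) - v (n - 1) + b n * v n = lam * v n)
    (hv0 : v 0 = 0) (hv1 : v 1 = 1) :
    v 4 = -lam ^ 3 + 3 * α * lam ^ 2 - (3 * α ^ 2 - 7 / 2) * lam + α ^ 3 - 7 * α / 2 :=
  dirichlet_poly_independent_of_sign_general α σ hσ b hb1 hb2 hb3 lam v hv hv0 hv1
end

section
/- The system of equations in (b₁, b₂, b₃, b₄) ∈ ℂ⁴: S₁ = 0, S₂ = 0, S₃ = 0, and S₄ = b₁b₂ + b₂b₃ + b₃b₄ + b₄b₁ (where S_k are the elementary symmetric polynomials) has exactly nine solutions: the zero solution and the eight vectors obtained from (1+i, 1-i, -1+i, -1-i) by cyclic permutation and complex conjugation. -/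
/-!
Pair the variables that are opposite on the 4-cycle: with `s = b₁ + b₃`, `p = b₁ b₃`,
`t = b₂ + b₄`, `q = b₂ b₄`, the cyclic sum is `s t`, and the system reads
`s + t = 0`, `p + q + s t = 0`, `s q + t p = 0`, `p q = s t`.
Either everything vanishes, or `t = -s`, `p = q = -2` and `s² = -4`, so `s = ±2i`;
each pair is then the root pair of `x² ∓ 2i x - 2`, i.e. `{±1 + i}` or `{±1 - i}`.
-/

open Complex

section Domain

variable {R : Type*} [CommRing R] [IsDomain R]

theorem add_eq_and_mul_eq_iff {x y r r' s p : R} (hs : r + r' = s) (hp : r * r' = p) :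
    x + y = s ∧ x * y = p ↔ (x = r ∧ y = r') ∨ (x = r' ∧ y = r) := by
  subst hs hp
  constructor
  · rintro ⟨hsum, hprod⟩
    have hy : y = r + r' - x := by linear_combination hsum
    subst hy
    have hroots : (x - r) * (x - r') = 0 := by linear_combination -hprod
    rcases mul_eq_zero.mp hroots with hx | hx
    · exact .inl ⟨by linear_combination hx, by linear_combination -hx⟩
    · exact .inr ⟨by linear_combination hx, by linear_combination -hx⟩
  · rintro (⟨rfl, rfl⟩ | ⟨rfl, rfl⟩)
    · exact ⟨rfl, rfl⟩
    · exact ⟨add_comm _ _, mul_comm _ _⟩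

theorem pair_system_iff {s p t q : R} :
    s + t = 0 ∧ p + q + s * t = 0 ∧ s * q + t * p = 0 ∧ p * q = s * t ↔
      (s = 0 ∧ p = 0) ∧ (t = 0 ∧ q = 0) ∨ (s ^ 2 = -4 ∧ p = -2) ∧ (t = -s ∧ q = -2) := by
  constructor
  · rintro ⟨h₁, h₂, h₃, h₄⟩
    obtain rfl : t = -s := by linear_combination h₁
    have hsum : p + q = s ^ 2 := by linear_combination h₂
    have hprod : p * q = -s ^ 2 := by linear_combination h₄
    rcases eq_or_ne s 0 with rfl | hs
    · have hp : p ^ 2 = 0 := by linear_combination p * hsum - hprod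
      obtain rfl : p = 0 := pow_eq_zero_iff two_ne_zero |>.mp hp
      exact .inl ⟨⟨rfl, rfl⟩, neg_zero, by linear_combination hsum⟩
    · obtain rfl : q = p := mul_left_cancel₀ hs (by linear_combination h₃)
      have hq : q * (q + 2) = 0 := by linear_combination hprod + hsum
      have hq : q + 2 = 0 := by
        refine (mul_eq_zero.mp hq).resolve_left fun hq ↦ hs ?_
        exact pow_eq_zero_iff two_ne_zero |>.mp (by linear_combination -hsum + 2 * hq)
      exact .inr ⟨⟨by linear_combination -hsum + 2 * hq, by linear_combination hq⟩, rfl,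
        by linear_combination hq⟩
  · rintro (⟨⟨rfl, rfl⟩, rfl, rfl⟩ | ⟨⟨hs, rfl⟩, rfl, rfl⟩)
    · simp
    · exact ⟨by ring, by linear_combination -hs, by ring, by linear_combination hs⟩

end Domain

theorem elementary_symm_system_iff_pairs {R : Type*} [CommRing R] (b₁ b₂ b₃ b₄ : R) :
    (b₁ + b₂ + b₃ + b₄ = 0 ∧
     b₁ * b₂ + b₁ * b₃ + b₁ * b₄ + b₂ * b₃ + b₂ * b₄ + b₃ * b₄ = 0 ∧
     b₁ * b₂ * b₃ + b₁ * b₂ * b₄ + b₁ * b₃ * b₄ + b₂ * b₃ * b₄ = 0 ∧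
     b₁ * b₂ * b₃ * b₄ = b₁ * b₂ + b₂ * b₃ + b₃ * b₄ + b₄ * b₁) ↔
    ((b₁ + b₃) + (b₂ + b₄) = 0 ∧
     b₁ * b₃ + b₂ * b₄ + (b₁ + b₃) * (b₂ + b₄) = 0 ∧
     (b₁ + b₃) * (b₂ * b₄) + (b₂ + b₄) * (b₁ * b₃) = 0 ∧
     (b₁ * b₃) * (b₂ * b₄) = (b₁ + b₃) * (b₂ + b₄)) := by
  refine and_congr ?_ (and_congr ?_ (and_congr ?_ ?_)) <;> ring_nf

theorem Complex.sq_eq_neg_four_iff {s : ℂ} : s ^ 2 = -4 ↔ s = 2 * I ∨ s = -2 * I := by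
  have : (-4 : ℂ) = (2 * I) ^ 2 := by linear_combination -4 * I_sq
  rw [this, sq_eq_sq_iff_eq_or_eq_neg, neg_mul]

theorem Complex.pair_system_iff {s p t q : ℂ} :
    s + t = 0 ∧ p + q + s * t = 0 ∧ s * q + t * p = 0 ∧ p * q = s * t ↔
      (s = 0 ∧ p = 0) ∧ (t = 0 ∧ q = 0) ∨ (s = 2 * I ∧ p = -2) ∧ (t = -2 * I ∧ q = -2) ∨
        (s = -2 * I ∧ p = -2) ∧ (t = 2 * I ∧ q = -2) := by
  rw [_root_.pair_system_iff, Complex.sq_eq_neg_four_iff]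
  constructor
  · rintro (h | ⟨⟨rfl | rfl, rfl⟩, rfl, rfl⟩)
    · exact .inl h
    · exact .inr (.inl ⟨⟨rfl, rfl⟩, by ring, rfl⟩)
    · exact .inr (.inr ⟨⟨rfl, rfl⟩, by ring, rfl⟩)
  · rintro (h | ⟨⟨rfl, rfl⟩, rfl, rfl⟩ | ⟨⟨rfl, rfl⟩, rfl, rfl⟩)
    · exact .inl h
    · exact .inr ⟨⟨.inl rfl, rfl⟩, by ring, rfl⟩
    · exact .inr ⟨⟨.inr rfl, rfl⟩, by ring, rfl⟩

/-- The system `S₁ = S₂ = S₃ = 0`, `S₄ = b₁b₂ + b₂b₃ + b₃b₄ + b₄b₁` in `ℂ⁴` has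
exactly nine solutions: zero, the four cyclic permutations of
`(1+i, 1-i, -1+i, -1-i)`, and their componentwise complex conjugates. -/
theorem four_periodic_potential_solutions (b₁ b₂ b₃ b₄ : ℂ) :
    (b₁ + b₂ + b₃ + b₄ = 0 ∧
     b₁ * b₂ + b₁ * b₃ + b₁ * b₄ + b₂ * b₃ + b₂ * b₄ + b₃ * b₄ = 0 ∧
     b₁ * b₂ * b₃ + b₁ * b₂ * b₄ + b₁ * b₃ * b₄ + b₂ * b₃ * b₄ = 0 ∧
     b₁ * b₂ * b₃ * b₄ = b₁ * b₂ + b₂ * b₃ + b₃ * b₄ + b₄ * b₁) ↔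
    ((b₁, b₂, b₃, b₄) = (0, 0, 0, 0) ∨
     (b₁, b₂, b₃, b₄) = (1 + I, 1 - I, -1 + I, -1 - I) ∨
     (b₁, b₂, b₃, b₄) = (-1 - I, 1 + I, 1 - I, -1 + I) ∨
     (b₁, b₂, b₃, b₄) = (-1 + I, -1 - I, 1 + I, 1 - I) ∨
     (b₁, b₂, b₃, b₄) = (1 - I, -1 + I, -1 - I, 1 + I) ∨
     (b₁, b₂, b₃, b₄) = (1 - I, 1 + I, -1 - I, -1 + I) ∨
     (b₁, b₂, b₃, b₄) = (-1 + I, 1 - I, 1 + I, -1 - I) ∨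
     (b₁, b₂, b₃, b₄) = (-1 - I, -1 + I, 1 - I, 1 + I) ∨
     (b₁, b₂, b₃, b₄) = (1 + I, -1 - I, -1 + I, 1 - I)) := by
  have hplus : (1 + I) + (-1 + I) = 2 * I ∧ (1 + I) * (-1 + I) = -2 :=
    ⟨by ring, by linear_combination I_sq⟩
  have hminus : (1 - I) + (-1 - I) = -2 * I ∧ (1 - I) * (-1 - I) = -2 :=
    ⟨by ring, by linear_combination I_sq⟩
  rw [elementary_symm_system_iff_pairs, Complex.pair_system_iff,
    add_eq_and_mul_eq_iff (add_zero 0) (mul_zero 0),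
    add_eq_and_mul_eq_iff (add_zero 0) (mul_zero 0),
    add_eq_and_mul_eq_iff hplus.1 hplus.2, add_eq_and_mul_eq_iff hminus.1 hminus.2,
    add_eq_and_mul_eq_iff hminus.1 hminus.2, add_eq_and_mul_eq_iff hplus.1 hplus.2]
  simp only [Prod.mk.injEq, or_self, and_or_left, or_and_right, and_assoc, or_assoc]
  constructor <;>
    rintro (⟨rfl, rfl, rfl, rfl⟩ | ⟨rfl, rfl, rfl, rfl⟩ | ⟨rfl, rfl, rfl, rfl⟩ |
      ⟨rfl, rfl, rfl, rfl⟩ | ⟨rfl, rfl, rfl, rfl⟩ | ⟨rfl, rfl, rfl, rfl⟩ |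
      ⟨rfl, rfl, rfl, rfl⟩ | ⟨rfl, rfl, rfl, rfl⟩ | ⟨rfl, rfl, rfl, rfl⟩) <;> simp
end
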